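/- arXiv:2104.09929 — 6 statements merged into one kernel-verified Lean document; each statement's English description precedes it below -/
import Mathlib

section
/- Let ν : R \ {0} → ℤ^N be a valuation with 1-dimensional leaves on a ℂ-algebra R without nonzero zero-divisors, and let V ⊆ R be a finite-dimensional ℂ-linear subspace. Then there exists a ℂ-basis B of V such that the values ν(b), b ∈ B, are pairwise distinct; moreover ν(V \ {0}) = {ν(b) | b ∈ B}, so the cardinality of ν(V \ {0}) equals dim_ℂ V. -/
/-!
Distinct values force linear independence by the ultrametric inequality, so choosing one element of
`V` for each value in `ν(V \ {0})` gives a finite independent set `B`. It spans `V`: otherwise pick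
`w ∈ V \ span B` of maximal value; 1-dimensional leaves let us subtract a multiple of the element of
`B` with the same value, which stays outside `span B` and has strictly larger value.
-/

open Set Submodule

/-- The axioms of a valuation that only involve the vector space structure. -/
structure IsUltrametricVal (K : Type*) {M Γ : Type*} [Field K] [AddCommGroup M] [Module K M]
    [LinearOrder Γ] (ν : M → Γ) : Prop where
  smul_eq : ∀ (c : K) (σ : M), c ≠ 0 → σ ≠ 0 → ν (c • σ) = ν σ
  min_le_add : ∀ σ τ : M, σ ≠ 0 → τ ≠ 0 → σ + τ ≠ 0 → min (ν σ) (ν τ) ≤ ν (σ + τ)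

/-- Every leaf `{ν ≥ a} / {ν > a}` has dimension at most one. -/
def HasOneDimLeaves (K : Type*) {M Γ : Type*} [Field K] [AddCommGroup M] [Module K M]
    [LinearOrder Γ] (ν : M → Γ) : Prop :=
  ∀ σ τ : M, σ ≠ 0 → τ ≠ 0 → ν σ = ν τ → ∃ c : K, σ - c • τ = 0 ∨ ν τ < ν (σ - c • τ)

section

variable {K M Γ : Type*} [Field K] [AddCommGroup M] [Module K M] [LinearOrder Γ] {ν : M → Γ}

namespace IsUltrametricVal

variable (hν : IsUltrametricVal K ν)
include hν

theorem val_neg {τ : M} (hτ : τ ≠ 0) : ν (-τ) = ν τ := by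
  simpa using hν.smul_eq (-1) τ (by norm_num) hτ

theorem add_ne_zero_and_val_eq_of_lt {σ τ : M} (hσ : σ ≠ 0) (hτ : τ ≠ 0) (h : ν σ < ν τ) :
    σ + τ ≠ 0 ∧ ν (σ + τ) = ν σ := by
  have hne : σ + τ ≠ 0 := by
    intro h0
    rw [eq_neg_of_add_eq_zero_right h0, hν.val_neg hσ] at h
    exact h.false
  refine ⟨hne, le_antisymm ?_ ?_⟩
  · have key := hν.min_le_add (σ + τ) (-τ) hne (neg_ne_zero.2 hτ) (by simpa using hσ)
    rw [add_neg_cancel_right, hν.val_neg hτ, min_le_iff] at key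
    exact key.resolve_right h.not_ge
  · simpa [min_eq_left h.le] using hν.min_le_add σ τ hσ hτ hne

theorem add_ne_zero_and_val_eq_min {σ τ : M} (hσ : σ ≠ 0) (hτ : τ ≠ 0) (h : ν σ ≠ ν τ) :
    σ + τ ≠ 0 ∧ ν (σ + τ) = min (ν σ) (ν τ) := by
  rcases h.lt_or_gt with h | h
  · simpa [min_eq_left h.le] using hν.add_ne_zero_and_val_eq_of_lt hσ hτ h
  · simpa [add_comm σ, min_eq_right h.le] using hν.add_ne_zero_and_val_eq_of_lt hτ hσ h

theorem sum_ne_zero_and_val_eq_inf' {ι : Type*} {f : ι → M} {s : Finset ι} (hs : s.Nonempty)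
    (hf0 : ∀ i ∈ s, f i ≠ 0) (hinj : InjOn (ν ∘ f) s) :
    ∑ i ∈ s, f i ≠ 0 ∧ ν (∑ i ∈ s, f i) = s.inf' hs (ν ∘ f) := by
  induction hs using Finset.Nonempty.cons_induction with
  | singleton a => simpa using hf0 a
  | cons a s ha hs ih =>
    simp only [Finset.coe_cons, Finset.mem_cons, forall_eq_or_imp] at hf0 hinj
    obtain ⟨hsum0, hsum⟩ := ih hf0.2 (hinj.mono (subset_insert _ _))
    obtain ⟨j, hj, hjmin⟩ := s.exists_mem_eq_inf' hs (ν ∘ f)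
    have hne : ν (f a) ≠ ν (∑ i ∈ s, f i) := by
      rw [hsum, hjmin]
      exact fun h => ha (hinj (mem_insert a _) (mem_insert_of_mem a hj) h ▸ hj)
    rw [Finset.sum_cons, Finset.inf'_cons hs, ← hsum]
    exact hν.add_ne_zero_and_val_eq_min hf0.1 hsum0 hne

theorem linearIndependent {ι : Type*} {v : ι → M} (hv0 : ∀ i, v i ≠ 0)
    (hinj : Function.Injective (ν ∘ v)) : LinearIndependent K v := by
  classical
  rw [linearIndependent_iff']
  intro s g hg i hi
  by_contra hgi
  set t := s.filter (fun j => g j • v j ≠ 0)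
  have hit : i ∈ t := Finset.mem_filter.2 ⟨hi, smul_ne_zero hgi (hv0 i)⟩
  have hval : ∀ j ∈ t, ν (g j • v j) = ν (v j) := fun j hj =>
    hν.smul_eq _ _ (left_ne_zero_of_smul (Finset.mem_filter.1 hj).2) (hv0 j)
  have hsum : ∑ j ∈ t, g j • v j = 0 := by rwa [Finset.sum_filter_ne_zero]
  refine (hν.sum_ne_zero_and_val_eq_inf' ⟨i, hit⟩ (fun j hj => (Finset.mem_filter.1 hj).2) ?_).1 hsum
  intro j hj k hk hjk
  exact hinj (by simpa only [Function.comp, hval j hj, hval k hk] using hjk)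

theorem linearIndepOn_of_injOn {s : Set M} (hs0 : (0 : M) ∉ s) (hinj : InjOn ν s) :
    LinearIndepOn K id s :=
  hν.linearIndependent (fun b h => hs0 (h ▸ b.2)) hinj.injective

end IsUltrametricVal

theorem HasOneDimLeaves.span_eq_of_image_subset (hleaf : HasOneDimLeaves K ν)
    {V : Submodule K M} {B : Set M} (hBV : B ⊆ (V : Set M) \ {0})
    (hfin : (ν '' ((V : Set M) \ {0})).Finite) (himg : ν '' ((V : Set M) \ {0}) ⊆ ν '' B) :
    span K B = V := by
  refine le_antisymm (span_le.2 fun b hb => (hBV hb).1) fun w₀ hw₀ => ?_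
  by_contra hw₀B
  have hfin' : (ν '' ((V : Set M) \ span K B)).Finite :=
    hfin.subset <| image_mono fun w hw => ⟨hw.1, fun h => hw.2 (h ▸ zero_mem _)⟩
  obtain ⟨w, ⟨hwV, hwB⟩, hmax⟩ := hfin'.exists_maximalFor' ν _ ⟨w₀, hw₀, hw₀B⟩
  have hw0 : w ≠ 0 := fun h => hwB (h ▸ zero_mem _)
  obtain ⟨b, hb, hνb⟩ := himg ⟨w, ⟨hwV, hw0⟩, rfl⟩
  have hcb : ∀ c : K, c • b ∈ span K B := fun c => smul_mem _ c (subset_span hb)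
  obtain ⟨c, hc | hc⟩ := hleaf w b hw0 (hBV hb).2 hνb.symm
  · exact hwB (sub_eq_zero.1 hc ▸ hcb c)
  · have hout : w - c • b ∈ (V : Set M) \ span K B :=
      ⟨sub_mem hwV (smul_mem _ c (hBV hb).1), fun h => hwB (by simpa using add_mem h (hcb c))⟩
    exact (hνb ▸ hc).not_ge (hmax hout (hνb ▸ hc).le)

theorem exists_finset_injOn_span_eq (hν : IsUltrametricVal K ν) (hleaf : HasOneDimLeaves K ν)
    (V : Submodule K M) [FiniteDimensional K V] :
    ∃ B : Finset M, (B : Set M) ⊆ (V : Set M) \ {0} ∧ InjOn ν B ∧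
      ν '' B = ν '' ((V : Set M) \ {0}) ∧ span K (B : Set M) = V := by
  obtain ⟨B, hBV, hbij⟩ := exists_subset_bijOn ((V : Set M) \ {0}) ν
  have hli : LinearIndependent K (fun b : B => (⟨b, (hBV b.2).1⟩ : V)) :=
    .of_comp V.subtype (hν.linearIndepOn_of_injOn (fun h => (hBV h).2 rfl) hbij.injOn)
  have hfin : B.Finite := finite_coe_iff.1 hli.finite_of_isNoetherian
  lift B to Finset M using hfin
  refine ⟨B, hBV, hbij.injOn, hbij.image_eq, hleaf.span_eq_of_image_subset hBV ?_ hbij.image_eq.ge⟩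
  exact hbij.image_eq ▸ B.finite_toSet.image ν

end

theorem stmt1_general {R : Type*} [CommRing R] [Algebra ℂ R] {N : ℕ}
    (l : LinearOrder (Fin N → ℤ))
    (ν : R → Fin N → ℤ)
    (hsmul : ∀ (c : ℂ) (σ : R), c ≠ 0 → σ ≠ 0 → ν (algebraMap ℂ R c * σ) = ν σ)
    (hsum : ∀ σ τ : R, σ ≠ 0 → τ ≠ 0 → σ + τ ≠ 0 →
      l.le (l.min (ν σ) (ν τ)) (ν (σ + τ)))
    -- `ν` has 1-dimensional leaves: two nonzero elements with the same value agree up to a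
    -- nonzero scalar modulo elements of strictly larger value.
    (hleaf : ∀ σ τ : R, σ ≠ 0 → τ ≠ 0 → ν σ = ν τ →
      ∃ c : ℂ, c ≠ 0 ∧ (σ - algebraMap ℂ R c * τ = 0 ∨
        l.lt (ν τ) (ν (σ - algebraMap ℂ R c * τ))))
    (V : Submodule ℂ R) [FiniteDimensional ℂ V] :
    ∃ B : Finset R, (B : Set R) ⊆ (V : Set R) ∧ (0 : R) ∉ B ∧
      LinearIndependent ℂ (fun b : B => (b : R)) ∧
      Submodule.span ℂ (B : Set R) = V ∧
      Set.InjOn ν (B : Set R) ∧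
      ν '' ((V : Set R) \ {0}) = ν '' (B : Set R) ∧
      B.card = Module.finrank ℂ V := by
  let := l
  have hν : IsUltrametricVal ℂ ν :=
    ⟨fun c σ hc hσ => by rw [Algebra.smul_def]; exact hsmul c σ hc hσ, hsum⟩
  have hleaf' : HasOneDimLeaves ℂ ν := fun σ τ hσ hτ h => by
    obtain ⟨c, -, hc⟩ := hleaf σ τ hσ hτ h
    exact ⟨c, by simpa only [Algebra.smul_def] using hc⟩
  obtain ⟨B, hBV, hinj, himg, hspan⟩ := exists_finset_injOn_span_eq hν hleaf' V
  have h0 : (0 : R) ∉ B := fun h => (hBV h).2 rfl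
  have hli : LinearIndependent ℂ (fun b : B => (b : R)) := hν.linearIndepOn_of_injOn h0 hinj
  refine ⟨B, fun b hb => (hBV hb).1, h0, hli, hspan, hinj, himg.symm, ?_⟩
  rw [← finrank_span_finset_eq_card hli, hspan]

/-- A valuation with 1-dimensional leaves on a `ℂ`-algebra without nonzero zero-divisors:
every finite-dimensional subspace `V` admits a basis `B` on which `ν` is injective, and
`ν(V \ {0})` is exactly the set of values on `B`; in particular its cardinality is `dim V`. -/
theorem stmt1 {R : Type*} [CommRing R] [IsDomain R] [Algebra ℂ R] {N : ℕ}
    (l : LinearOrder (Fin N → ℤ))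
    (hcompat : ∀ a b c : Fin N → ℤ, l.le a b → l.le (a + c) (b + c))
    (ν : R → Fin N → ℤ)
    (hmul : ∀ σ τ : R, σ ≠ 0 → τ ≠ 0 → ν (σ * τ) = ν σ + ν τ)
    (hsmul : ∀ (c : ℂ) (σ : R), c ≠ 0 → σ ≠ 0 → ν (algebraMap ℂ R c * σ) = ν σ)
    (hsum : ∀ σ τ : R, σ ≠ 0 → τ ≠ 0 → σ + τ ≠ 0 →
      l.le (l.min (ν σ) (ν τ)) (ν (σ + τ)))
    -- `ν` has 1-dimensional leaves: two nonzero elements with the same value agree up to a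
    -- nonzero scalar modulo elements of strictly larger value.
    (hleaf : ∀ σ τ : R, σ ≠ 0 → τ ≠ 0 → ν σ = ν τ →
      ∃ c : ℂ, c ≠ 0 ∧ (σ - algebraMap ℂ R c * τ = 0 ∨
        l.lt (ν τ) (ν (σ - algebraMap ℂ R c * τ))))
    (V : Submodule ℂ R) [FiniteDimensional ℂ V] :
    ∃ B : Finset R, (B : Set R) ⊆ (V : Set R) ∧ (0 : R) ∉ B ∧
      LinearIndependent ℂ (fun b : B => (b : R)) ∧
      Submodule.span ℂ (B : Set R) = V ∧
      Set.InjOn ν (B : Set R) ∧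
      ν '' ((V : Set R) \ {0}) = ν '' (B : Set R) ∧
      B.card = Module.finrank ℂ V :=
  stmt1_general l ν hsmul hsum hleaf V
end

section
/- Let λ_1, λ_2 ∈ ℝ_{≥0} and set Λ_1 = λ_1 + λ_2, Λ_2 = λ_2. Define O ⊆ ℝ³ as the set of (a,b,c) with 0 ≤ a ≤ b ≤ c ≤ Λ_1 and a ≤ Λ_2 ≤ c, and define D ⊆ ℝ³ as the set of (a,b,c) with 0 ≤ a ≤ Λ_2, Λ_2 ≤ c ≤ Λ_1, and 0 ≤ b ≤ c − a. Then the map φ(a,b,c) = (a, b−a, c) is a bijection from O onto D. -/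
/-!
The map `(a, b, c) ↦ (a, b - a, c)` is a shear with inverse `(a, b, c) ↦ (a, a + b, c)`.
It leaves the constraints on `a` and `c` untouched and turns the chain `a ≤ b ≤ c` into
`0 ≤ b - a ≤ c - a`, so it maps each polytope into the other and the two maps are mutually inverse.
-/

namespace GelfandTsetlinA2

variable {α : Type*} [AddCommGroup α]

def shear (p : α × α × α) : α × α × α := (p.1, p.2.1 - p.1, p.2.2)

def unshear (p : α × α × α) : α × α × α := (p.1, p.1 + p.2.1, p.2.2)

theorem unshear_shear (p : α × α × α) : unshear (shear p) = p := by
  simp [shear, unshear]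

theorem shear_unshear (p : α × α × α) : shear (unshear p) = p := by
  simp [shear, unshear]

/-- The Gelfand–Tsetlin polytope of type `A₂` for `Λ₁ = top`, `Λ₂ = mid`. -/
def orderPolytope [LE α] (top mid : α) : Set (α × α × α) :=
  {p | 0 ≤ p.1 ∧ p.1 ≤ p.2.1 ∧ p.2.1 ≤ p.2.2 ∧ p.2.2 ≤ top ∧ p.1 ≤ mid ∧ mid ≤ p.2.2}

/-- The marked chain-order polytope with `C = {q₁⁽²⁾}`, `O = {q₁⁽¹⁾, q₂⁽¹⁾}`. -/
def chainOrderPolytope [LE α] (top mid : α) : Set (α × α × α) :=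
  {p | 0 ≤ p.1 ∧ p.1 ≤ mid ∧ mid ≤ p.2.2 ∧ p.2.2 ≤ top ∧ 0 ≤ p.2.1 ∧ p.2.1 ≤ p.2.2 - p.1}

variable [PartialOrder α] [IsOrderedAddMonoid α]

theorem mapsTo_shear (top mid : α) :
    Set.MapsTo shear (orderPolytope top mid) (chainOrderPolytope top mid) := by
  rintro ⟨a, b, c⟩ ⟨ha, hab, hbc, hc, ha_mid, hmid_c⟩
  exact ⟨ha, ha_mid, hmid_c, hc, sub_nonneg.mpr hab, sub_le_sub_right hbc a⟩

theorem mapsTo_unshear (top mid : α) :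
    Set.MapsTo unshear (chainOrderPolytope top mid) (orderPolytope top mid) := by
  rintro ⟨a, b, c⟩ ⟨ha, ha_mid, hmid_c, hc, hb, hb_c⟩
  exact ⟨ha, le_add_of_nonneg_right hb, le_sub_iff_add_le'.mp hb_c, hc, ha_mid, hmid_c⟩

theorem bijOn_shear (top mid : α) :
    Set.BijOn shear (orderPolytope top mid) (chainOrderPolytope top mid) :=
  Set.InvOn.bijOn ⟨fun p _ => unshear_shear p, fun p _ => shear_unshear p⟩
    (mapsTo_shear top mid) (mapsTo_unshear top mid)

end GelfandTsetlinA2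

theorem stmt6_general (lam1 lam2 : ℝ) :
    Set.BijOn (fun p : ℝ × ℝ × ℝ => (p.1, p.2.1 - p.1, p.2.2))
      {p : ℝ × ℝ × ℝ | 0 ≤ p.1 ∧ p.1 ≤ p.2.1 ∧ p.2.1 ≤ p.2.2 ∧ p.2.2 ≤ lam1 + lam2 ∧
        p.1 ≤ lam2 ∧ lam2 ≤ p.2.2}
      {p : ℝ × ℝ × ℝ | 0 ≤ p.1 ∧ p.1 ≤ lam2 ∧ lam2 ≤ p.2.2 ∧ p.2.2 ≤ lam1 + lam2 ∧
        0 ≤ p.2.1 ∧ p.2.1 ≤ p.2.2 - p.1} :=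
  GelfandTsetlinA2.bijOn_shear (lam1 + lam2) lam2

/-- The transfer map `(a,b,c) ↦ (a, b-a, c)` is a bijection from the Gelfand--Tsetlin polytope
of type `A₂` onto the marked chain-order polytope with `C = {q₁⁽²⁾}`, `O = {q₁⁽¹⁾, q₂⁽¹⁾}`. -/
theorem stmt6 (lam1 lam2 : ℝ) (h1 : 0 ≤ lam1) (h2 : 0 ≤ lam2) :
    Set.BijOn (fun p : ℝ × ℝ × ℝ => (p.1, p.2.1 - p.1, p.2.2))
      {p : ℝ × ℝ × ℝ | 0 ≤ p.1 ∧ p.1 ≤ p.2.1 ∧ p.2.1 ≤ p.2.2 ∧ p.2.2 ≤ lam1 + lam2 ∧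
        p.1 ≤ lam2 ∧ lam2 ≤ p.2.2}
      {p : ℝ × ℝ × ℝ | 0 ≤ p.1 ∧ p.1 ≤ lam2 ∧ lam2 ≤ p.2.2 ∧ p.2.2 ≤ lam1 + lam2 ∧
        0 ≤ p.2.1 ∧ p.2.1 ≤ p.2.2 - p.1} :=
  stmt6_general lam1 lam2
end

section
/- Let λ_1, λ_2 ∈ ℝ_{≥0} and set Λ_1 = λ_1 + λ_2, Λ_2 = λ_2. Define O ⊆ ℝ³ as the set of (a,b,c) with 0 ≤ a ≤ b ≤ c ≤ Λ_1 and a ≤ Λ_2 ≤ c, and define F ⊆ ℝ_{≥0}³ as the set of (x,y,z) with x ≤ Λ_2, z ≤ Λ_1 − Λ_2, and x + y + z ≤ Λ_1. Then the map φ(a,b,c) = (a, b−a, min{c−b, c−Λ_2}) is a bijection from O onto F. -/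
/-!
Since `min (c - b) (c - Λ₂) = c - max b Λ₂`, the transfer map is the triangular change of
coordinates `(a, b, c) ↦ (a, b - a, c - max b Λ₂)`, whose inverse on all of `ℝ³` is
`(x, y, z) ↦ (x, x + y, z + max (x + y) Λ₂)`. It remains to check that each of the two maps
sends one polytope into the other, which is linear arithmetic.
-/

open Set

namespace TransferMap

def gelfandTsetlin (Λ₁ Λ₂ : ℝ) : Set (ℝ × ℝ × ℝ) :=
  {p | 0 ≤ p.1 ∧ p.1 ≤ p.2.1 ∧ p.2.1 ≤ p.2.2 ∧ p.2.2 ≤ Λ₁ ∧ p.1 ≤ Λ₂ ∧ Λ₂ ≤ p.2.2}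

def fflv (Λ₁ Λ₂ : ℝ) : Set (ℝ × ℝ × ℝ) :=
  {p | 0 ≤ p.1 ∧ 0 ≤ p.2.1 ∧ 0 ≤ p.2.2 ∧ p.1 ≤ Λ₂ ∧ p.2.2 ≤ Λ₁ - Λ₂ ∧
    p.1 + p.2.1 + p.2.2 ≤ Λ₁}

def transferEquiv (Λ₂ : ℝ) : ℝ × ℝ × ℝ ≃ ℝ × ℝ × ℝ where
  toFun p := (p.1, p.2.1 - p.1, min (p.2.2 - p.2.1) (p.2.2 - Λ₂))
  invFun q := (q.1, q.1 + q.2.1, q.2.2 + max (q.1 + q.2.1) Λ₂)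
  left_inv p := by simp [min_sub_sub_left]
  right_inv q := by simp [min_sub_sub_left]

theorem transferEquiv_apply (Λ₂ : ℝ) (p : ℝ × ℝ × ℝ) :
    transferEquiv Λ₂ p = (p.1, p.2.1 - p.1, p.2.2 - max p.2.1 Λ₂) := by
  simp [transferEquiv, min_sub_sub_left]

theorem transferEquiv_symm_apply (Λ₂ : ℝ) (q : ℝ × ℝ × ℝ) :
    (transferEquiv Λ₂).symm q = (q.1, q.1 + q.2.1, q.2.2 + max (q.1 + q.2.1) Λ₂) :=
  rfl

theorem mapsTo_transferEquiv (Λ₁ Λ₂ : ℝ) :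
    MapsTo (transferEquiv Λ₂) (gelfandTsetlin Λ₁ Λ₂) (fflv Λ₁ Λ₂) := by
  rintro ⟨a, b, c⟩ ⟨ha, hab, hbc, hc, haΛ, hΛc⟩
  rw [transferEquiv_apply]
  have hb := le_max_left b Λ₂
  have hΛ := le_max_right b Λ₂
  have hmax := max_le hbc hΛc
  exact ⟨ha, by linarith, by linarith, haΛ, by linarith, by linarith⟩

theorem mapsTo_transferEquiv_symm (Λ₁ Λ₂ : ℝ) :
    MapsTo (transferEquiv Λ₂).symm (fflv Λ₁ Λ₂) (gelfandTsetlin Λ₁ Λ₂) := by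
  rintro ⟨x, y, z⟩ ⟨hx, hy, hz, hxΛ, hzΛ, hsum⟩
  rw [transferEquiv_symm_apply]
  have hxy := le_max_left (x + y) Λ₂
  have hΛ := le_max_right (x + y) Λ₂
  have hmax : z + max (x + y) Λ₂ ≤ Λ₁ := by
    rw [← le_sub_iff_add_le', max_le_iff]
    constructor <;> linarith
  exact ⟨hx, by linarith, by linarith, hmax, hxΛ, by linarith⟩

theorem bijOn_transferEquiv (Λ₁ Λ₂ : ℝ) :
    BijOn (transferEquiv Λ₂) (gelfandTsetlin Λ₁ Λ₂) (fflv Λ₁ Λ₂) :=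
  (transferEquiv Λ₂).bijOn' (mapsTo_transferEquiv Λ₁ Λ₂) (mapsTo_transferEquiv_symm Λ₁ Λ₂)

end TransferMap

theorem stmt7_general (lam1 lam2 : ℝ) :
    Set.BijOn (fun p : ℝ × ℝ × ℝ => (p.1, p.2.1 - p.1, min (p.2.2 - p.2.1) (p.2.2 - lam2)))
      {p : ℝ × ℝ × ℝ | 0 ≤ p.1 ∧ p.1 ≤ p.2.1 ∧ p.2.1 ≤ p.2.2 ∧ p.2.2 ≤ lam1 + lam2 ∧
        p.1 ≤ lam2 ∧ lam2 ≤ p.2.2}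
      {p : ℝ × ℝ × ℝ | 0 ≤ p.1 ∧ 0 ≤ p.2.1 ∧ 0 ≤ p.2.2 ∧ p.1 ≤ lam2 ∧
        p.2.2 ≤ (lam1 + lam2) - lam2 ∧ p.1 + p.2.1 + p.2.2 ≤ lam1 + lam2} :=
  TransferMap.bijOn_transferEquiv (lam1 + lam2) lam2

/-- The Ardila--Bliem--Salazar transfer map `(a,b,c) ↦ (a, b-a, min (c-b) (c-Λ₂))` is a
bijection from the Gelfand--Tsetlin polytope of type `A₂` onto the FFLV polytope. -/
theorem stmt7 (lam1 lam2 : ℝ) (h1 : 0 ≤ lam1) (h2 : 0 ≤ lam2) :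
    Set.BijOn (fun p : ℝ × ℝ × ℝ => (p.1, p.2.1 - p.1, min (p.2.2 - p.2.1) (p.2.2 - lam2)))
      {p : ℝ × ℝ × ℝ | 0 ≤ p.1 ∧ p.1 ≤ p.2.1 ∧ p.2.1 ≤ p.2.2 ∧ p.2.2 ≤ lam1 + lam2 ∧
        p.1 ≤ lam2 ∧ lam2 ≤ p.2.2}
      {p : ℝ × ℝ × ℝ | 0 ≤ p.1 ∧ 0 ≤ p.2.1 ∧ 0 ≤ p.2.2 ∧ p.1 ≤ lam2 ∧
        p.2.2 ≤ (lam1 + lam2) - lam2 ∧ p.1 + p.2.1 + p.2.2 ≤ lam1 + lam2} :=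
  stmt7_general lam1 lam2
end

section
/- Let λ_1, λ2 ∈ ℝ_{≥0}. Define Δ(λ_1, λ_2) ⊆ ℝ³ by: 0 ≤ a ≤ λ_2, λ_2 ≤ c ≤ λ_1 + λ_2, 0 ≤ b ≤ c − a. Then Δ(λ_1, λ_2) equals the Minkowski sum λ_1·Δ(1,0) + λ_2·Δ(0,1), where Δ(1,0) = {(a,b,c) : a = 0, 0 ≤ c ≤ 1, 0 ≤ b ≤ c} and Δ(0,1) = {(a,b,c) : 0 ≤ a ≤ 1, c = 1, 0 ≤ b ≤ 1 − a}. -/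
/-!
The polytope is cut out by inequalities whose right-hand sides are linear in `(λ₁, λ₂)`, so it
scales with `(λ₁, λ₂)`, and sums of its points satisfy the inequalities for summed parameters.
Conversely a point of `Δ(λ₁ + μ₁, λ₂ + μ₂)` splits coordinate by coordinate: first `a` and `c`,
each lying in a sum of two intervals, and then `b ∈ [0, (c₁ - a₁) + (c₂ - a₂)]`, where both
summands are nonnegative because `a₁ ≤ λ₂ ≤ c₁` and `a₂ ≤ μ₂ ≤ c₂`.
-/

open Pointwise Set

/-- The marked chain-order polytope `Δ(λ₁, λ₂)` of type `A₂`, with coordinates `p = (a, b, c)`. -/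
def chainOrderPolytope (l1 l2 : ℝ) : Set (ℝ × ℝ × ℝ) :=
  {p | 0 ≤ p.1 ∧ p.1 ≤ l2 ∧ l2 ≤ p.2.2 ∧ p.2.2 ≤ l1 + l2 ∧ 0 ≤ p.2.1 ∧ p.2.1 ≤ p.2.2 - p.1}

namespace chainOrderPolytope

theorem nonempty {l1 l2 : ℝ} (h1 : 0 ≤ l1) (h2 : 0 ≤ l2) : (chainOrderPolytope l1 l2).Nonempty :=
  ⟨(0, 0, l2), le_rfl, h2, le_rfl, le_add_of_nonneg_left h1, le_rfl, by simpa using h2⟩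

theorem zero_zero : chainOrderPolytope 0 0 = 0 := by
  ext ⟨a, b, c⟩
  simp only [chainOrderPolytope, mem_ofPred_eq, zero_add, Set.mem_zero, Prod.mk_eq_zero]
  constructor
  · rintro ⟨ha₀, ha, hc₀, hc, hb₀, hb⟩
    exact ⟨le_antisymm ha ha₀, le_antisymm (by linarith) hb₀, le_antisymm hc hc₀⟩
  · rintro ⟨rfl, rfl, rfl⟩
    norm_num

theorem smul_subset {t : ℝ} (ht : 0 ≤ t) (l1 l2 : ℝ) :
    t • chainOrderPolytope l1 l2 ⊆ chainOrderPolytope (t * l1) (t * l2) := by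
  rintro _ ⟨⟨a, b, c⟩, ⟨ha₀, ha, hc₀, hc, hb₀, hb⟩, rfl⟩
  simp only [chainOrderPolytope, mem_ofPred_eq, Prod.smul_mk, smul_eq_mul, ← mul_add, ← mul_sub]
  exact ⟨mul_nonneg ht ha₀, mul_le_mul_of_nonneg_left ha ht, mul_le_mul_of_nonneg_left hc₀ ht,
    mul_le_mul_of_nonneg_left hc ht, mul_nonneg ht hb₀, mul_le_mul_of_nonneg_left hb ht⟩

/-- For `t > 0` the reverse inclusion is `smul_subset` for `t⁻¹`; for `t = 0` both sides are `0`. -/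
theorem smul {t l1 l2 : ℝ} (ht : 0 ≤ t) (h1 : 0 ≤ l1) (h2 : 0 ≤ l2) :
    t • chainOrderPolytope l1 l2 = chainOrderPolytope (t * l1) (t * l2) := by
  rcases ht.eq_or_lt with rfl | ht
  · rw [zero_smul_set (nonempty h1 h2), zero_mul, zero_mul, zero_zero]
  refine (smul_subset ht.le l1 l2).antisymm ?_
  calc chainOrderPolytope (t * l1) (t * l2)
      = t • t⁻¹ • chainOrderPolytope (t * l1) (t * l2) := (smul_inv_smul₀ ht.ne' _).symm
    _ ⊆ t • chainOrderPolytope (t⁻¹ * (t * l1)) (t⁻¹ * (t * l2)) :=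
        smul_set_mono (smul_subset (inv_nonneg.2 ht.le) _ _)
    _ = t • chainOrderPolytope l1 l2 := by simp only [inv_mul_cancel_left₀ ht.ne']

theorem add_subset (l1 l2 m1 m2 : ℝ) :
    chainOrderPolytope l1 l2 + chainOrderPolytope m1 m2 ⊆
      chainOrderPolytope (l1 + m1) (l2 + m2) := by
  rintro _ ⟨⟨a, b, c⟩, ⟨ha₀, ha, hc₀, hc, hb₀, hb⟩, ⟨a', b', c'⟩,
    ⟨ha₀', ha', hc₀', hc', hb₀', hb'⟩, rfl⟩
  simp only [chainOrderPolytope, mem_ofPred_eq, Prod.mk_add_mk]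
  refine ⟨?_, ?_, ?_, ?_, ?_, ?_⟩ <;> linarith

theorem add {l1 l2 m1 m2 : ℝ} (hl1 : 0 ≤ l1) (hl2 : 0 ≤ l2) (hm1 : 0 ≤ m1) (hm2 : 0 ≤ m2) :
    chainOrderPolytope l1 l2 + chainOrderPolytope m1 m2 =
      chainOrderPolytope (l1 + m1) (l2 + m2) := by
  refine (add_subset l1 l2 m1 m2).antisymm ?_
  rintro ⟨a, b, c⟩ ⟨ha₀, ha, hc₀, hc, hb₀, hb⟩
  have ha_mem : a ∈ Icc 0 l2 + Icc 0 m2 := by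
    rw [Icc_add_Icc hl2 hm2, zero_add]
    exact ⟨ha₀, ha⟩
  obtain ⟨a₁, ⟨ha₁₀, ha₁⟩, a₂, ⟨ha₂₀, ha₂⟩, rfl⟩ := ha_mem
  have hc_mem : c ∈ Icc l2 (l1 + l2) + Icc m2 (m1 + m2) := by
    rw [Icc_add_Icc (le_add_of_nonneg_left hl1) (le_add_of_nonneg_left hm1)]
    exact ⟨hc₀, by linarith⟩
  obtain ⟨c₁, ⟨hc₁₀, hc₁⟩, c₂, ⟨hc₂₀, hc₂⟩, rfl⟩ := hc_mem
  have hb_mem : b ∈ Icc 0 (c₁ - a₁) + Icc 0 (c₂ - a₂) := by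
    rw [Icc_add_Icc (by linarith) (by linarith), zero_add]
    exact ⟨hb₀, by linarith⟩
  obtain ⟨b₁, ⟨hb₁₀, hb₁⟩, b₂, ⟨hb₂₀, hb₂⟩, rfl⟩ := hb_mem
  exact ⟨(a₁, b₁, c₁), ⟨ha₁₀, ha₁, hc₁₀, hc₁, hb₁₀, hb₁⟩, (a₂, b₂, c₂),
    ⟨ha₂₀, ha₂, hc₂₀, hc₂, hb₂₀, hb₂⟩, rfl⟩

theorem one_zero :
    chainOrderPolytope 1 0 =
      {p : ℝ × ℝ × ℝ | p.1 = 0 ∧ 0 ≤ p.2.2 ∧ p.2.2 ≤ 1 ∧ 0 ≤ p.2.1 ∧ p.2.1 ≤ p.2.2} := by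
  ext ⟨a, b, c⟩
  simp only [chainOrderPolytope, mem_ofPred_eq, add_zero]
  constructor
  · rintro ⟨ha₀, ha, hc₀, hc, hb₀, hb⟩
    obtain rfl : a = 0 := le_antisymm ha ha₀
    exact ⟨rfl, hc₀, hc, hb₀, by simpa using hb⟩
  · rintro ⟨rfl, hc₀, hc, hb₀, hb⟩
    exact ⟨le_rfl, le_rfl, hc₀, hc, hb₀, by simpa using hb⟩

theorem zero_one :
    chainOrderPolytope 0 1 = {p : ℝ × ℝ × ℝ | 0 ≤ p.1 ∧ p.1 ≤ 1 ∧ p.2.2 = 1 ∧ 0 ≤ p.2.1 ∧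
      p.2.1 ≤ 1 - p.1} := by
  ext ⟨a, b, c⟩
  simp only [chainOrderPolytope, mem_ofPred_eq, zero_add]
  constructor
  · rintro ⟨ha₀, ha, hc₀, hc, hb₀, hb⟩
    obtain rfl : c = 1 := le_antisymm hc hc₀
    exact ⟨ha₀, ha, rfl, hb₀, hb⟩
  · rintro ⟨ha₀, ha, rfl, hb₀, hb⟩
    exact ⟨ha₀, ha, le_rfl, le_rfl, hb₀, hb⟩

end chainOrderPolytope

/-- Minkowski decomposition of the marked chain-order polytope of type `A₂`
(`C = {q₁⁽²⁾}`, `O = {q₁⁽¹⁾, q₂⁽¹⁾}`):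
`Δ(λ₁,λ₂) = λ₁ • Δ(1,0) + λ₂ • Δ(0,1)`. -/
theorem stmt9 (l1 l2 : ℝ) (h1 : 0 ≤ l1) (h2 : 0 ≤ l2) :
    {p : ℝ × ℝ × ℝ | 0 ≤ p.1 ∧ p.1 ≤ l2 ∧ l2 ≤ p.2.2 ∧ p.2.2 ≤ l1 + l2 ∧
        0 ≤ p.2.1 ∧ p.2.1 ≤ p.2.2 - p.1}
      = l1 • {p : ℝ × ℝ × ℝ | p.1 = 0 ∧ 0 ≤ p.2.2 ∧ p.2.2 ≤ 1 ∧ 0 ≤ p.2.1 ∧ p.2.1 ≤ p.2.2}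
        + l2 • {p : ℝ × ℝ × ℝ | 0 ≤ p.1 ∧ p.1 ≤ 1 ∧ p.2.2 = 1 ∧ 0 ≤ p.2.1 ∧
            p.2.1 ≤ 1 - p.1} := by
  rw [← chainOrderPolytope.one_zero, ← chainOrderPolytope.zero_one,
    chainOrderPolytope.smul h1 zero_le_one le_rfl, chainOrderPolytope.smul h2 le_rfl zero_le_one]
  simp only [mul_one, mul_zero, chainOrderPolytope.add h1 le_rfl le_rfl h2, add_zero, zero_add]
  rfl
end

section
/- Let λ_1, λ_2 ∈ ℤ_{≥0}. With Δ(λ_1,λ_2) the set of lattice points (a,b,c) ∈ ℤ³ satisfying 0 ≤ a ≤ λ_2, λ_2 ≤ c ≤ λ_1+λ_2, 0 ≤ b ≤ c−a, the set Δ(λ_1,λ_2) equals the Minkowski sum (in ℤ³) of λ_1 copies of Δ(1,0) and λ_2 copies of Δ(0,1). -/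
/-!
Adding points of `Δ(λ₁, λ₂)` and `Δ(μ₁, μ₂)` preserves all defining inequalities, so
`Δ(λ₁, λ₂) + Δ(μ₁, μ₂) ⊆ Δ(λ₁ + μ₁, λ₂ + μ₂)`. Conversely, a point `(a, b, c)` of `Δ(λ₁ + 1, λ₂)`
splits off `(0, 0, 0) ∈ Δ(1, 0)` if `c ≤ λ₁ + λ₂`, and a point `(a, b, c)` of `Δ(λ₁, λ₂ + 1)`
splits off `(1, 0, 1) ∈ Δ(0, 1)` if `a > λ₂`; otherwise both split off `(0, 0, 1)` or `(0, 1, 1)`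
according to whether `b < c - a`. Induction on `λ₁` and `λ₂` then gives the decomposition.
-/

open Pointwise

/-- `Δ(λ₁, λ₂)`, with `p = (a, b, c)`. -/
def chainOrderPoints (l1 l2 : ℕ) : Set (ℤ × ℤ × ℤ) :=
  {p | 0 ≤ p.1 ∧ p.1 ≤ (l2 : ℤ) ∧ (l2 : ℤ) ≤ p.2.2 ∧
        p.2.2 ≤ (l1 : ℤ) + (l2 : ℤ) ∧ 0 ≤ p.2.1 ∧ p.2.1 ≤ p.2.2 - p.1}

namespace chainOrderPoints

lemma zero_zero : chainOrderPoints 0 0 = 0 := by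
  ext ⟨a, b, c⟩
  simp only [chainOrderPoints, Set.mem_ofPred_eq, Nat.cast_zero, Set.mem_zero, Prod.mk_eq_zero]
  omega

lemma one_zero :
    chainOrderPoints 1 0 = {p | p.1 = 0 ∧ 0 ≤ p.2.1 ∧ p.2.1 ≤ p.2.2 ∧ p.2.2 ≤ 1} := by
  ext ⟨a, b, c⟩
  simp only [chainOrderPoints, Set.mem_ofPred_eq, Nat.cast_zero, Nat.cast_one]
  omega

lemma zero_one :
    chainOrderPoints 0 1 = {p | 0 ≤ p.1 ∧ 0 ≤ p.2.1 ∧ p.1 + p.2.1 ≤ 1 ∧ p.2.2 = 1} := by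
  ext ⟨a, b, c⟩
  simp only [chainOrderPoints, Set.mem_ofPred_eq, Nat.cast_zero, Nat.cast_one]
  omega

lemma add_subset (l1 l2 m1 m2 : ℕ) :
    chainOrderPoints l1 l2 + chainOrderPoints m1 m2 ⊆ chainOrderPoints (l1 + m1) (l2 + m2) := by
  rintro _ ⟨⟨a, b, c⟩, hp, ⟨a', b', c'⟩, hq, rfl⟩
  simp only [chainOrderPoints, Set.mem_ofPred_eq, Prod.mk_add_mk, Nat.cast_add] at hp hq ⊢
  omega

lemma mem_add_of_sub_mem {S T : Set (ℤ × ℤ × ℤ)} {p q : ℤ × ℤ × ℤ}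
    (hS : p - q ∈ S) (hT : q ∈ T) : p ∈ S + T :=
  ⟨p - q, hS, q, hT, sub_add_cancel p q⟩

lemma succ_left (l1 l2 : ℕ) :
    chainOrderPoints (l1 + 1) l2 = chainOrderPoints l1 l2 + chainOrderPoints 1 0 := by
  refine subset_antisymm (fun p hp => ?_) (add_subset l1 l2 1 0)
  obtain ⟨a, b, c⟩ := p
  simp only [chainOrderPoints, Set.mem_ofPred_eq, Nat.cast_add, Nat.cast_one] at hp
  by_cases hc : c ≤ (l1 : ℤ) + l2
  · exact mem_add_of_sub_mem (q := (0, 0, 0)) (by simp [chainOrderPoints]; omega)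
      (by simp [chainOrderPoints])
  by_cases hb : b < c - a
  · exact mem_add_of_sub_mem (q := (0, 0, 1)) (by simp [chainOrderPoints]; omega)
      (by simp [chainOrderPoints])
  · exact mem_add_of_sub_mem (q := (0, 1, 1)) (by simp [chainOrderPoints]; omega)
      (by simp [chainOrderPoints])

lemma succ_right (l1 l2 : ℕ) :
    chainOrderPoints l1 (l2 + 1) = chainOrderPoints l1 l2 + chainOrderPoints 0 1 := by
  refine subset_antisymm (fun p hp => ?_) (add_subset l1 l2 0 1)
  obtain ⟨a, b, c⟩ := p
  simp only [chainOrderPoints, Set.mem_ofPred_eq, Nat.cast_add, Nat.cast_one] at hp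
  by_cases ha : (l2 : ℤ) < a
  · exact mem_add_of_sub_mem (q := (1, 0, 1)) (by simp [chainOrderPoints]; omega)
      (by simp [chainOrderPoints])
  by_cases hb : b < c - a
  · exact mem_add_of_sub_mem (q := (0, 0, 1)) (by simp [chainOrderPoints]; omega)
      (by simp [chainOrderPoints])
  · exact mem_add_of_sub_mem (q := (0, 1, 1)) (by simp [chainOrderPoints]; omega)
      (by simp [chainOrderPoints])

theorem eq_nsmul_add_nsmul (l1 l2 : ℕ) :
    chainOrderPoints l1 l2 = l1 • chainOrderPoints 1 0 + l2 • chainOrderPoints 0 1 := by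
  induction l1 with
  | zero =>
    induction l2 with
    | zero => simp [zero_zero]
    | succ l2 ih => rw [succ_right, ih, succ_nsmul, add_assoc]
  | succ l1 ih => rw [succ_left, ih, succ_nsmul, add_right_comm]

end chainOrderPoints

/-- Lattice-point Minkowski decomposition of the marked chain-order polytope of type `A₂`:
the set of lattice points of `Δ(λ₁,λ₂)` is the Minkowski sum (in `ℤ³`) of `λ₁` copies of the
lattice points of `Δ(1,0)` and `λ₂` copies of the lattice points of `Δ(0,1)`. -/
theorem stmt10 (l1 l2 : ℕ) :
    {p : ℤ × ℤ × ℤ | 0 ≤ p.1 ∧ p.1 ≤ (l2 : ℤ) ∧ (l2 : ℤ) ≤ p.2.2 ∧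
        p.2.2 ≤ (l1 : ℤ) + (l2 : ℤ) ∧ 0 ≤ p.2.1 ∧ p.2.1 ≤ p.2.2 - p.1}
      = (∑ _i ∈ Finset.range l1,
          {p : ℤ × ℤ × ℤ | p.1 = 0 ∧ 0 ≤ p.2.1 ∧ p.2.1 ≤ p.2.2 ∧ p.2.2 ≤ 1})
        + (∑ _i ∈ Finset.range l2,
          {p : ℤ × ℤ × ℤ | 0 ≤ p.1 ∧ 0 ≤ p.2.1 ∧ p.1 + p.2.1 ≤ 1 ∧ p.2.2 = 1}) := by
  simp only [Finset.sum_const, Finset.card_range, ← chainOrderPoints.one_zero,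
    ← chainOrderPoints.zero_one]
  exact chainOrderPoints.eq_nsmul_add_nsmul l1 l2
end

section
/- The polytope Δ ⊆ ℝ⁴ defined by a_1,a_2,a_3,a_4 ≥ 0, a_2 ≤ 1, a_4 ≤ 1, a_1 ≤ 1 + a_4 − a_2, a_3 ≤ 2 − a_2 − a_4 is an integral polytope (all vertices in ℤ⁴) with exactly 12 vertices, and its Euclidean volume equals 1. -/
/-!
In the coordinates `(((a₂, a₄), a₁), a₃)` the polytope is obtained from the unit square by taking
twice the region under the graph of a nonnegative affine function: `0 ≤ a₁ ≤ 1 + a₄ - a₂`, then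
`0 ≤ a₃ ≤ 2 - a₂ - a₄`. An extreme point of such a region lies over an extreme point of the base,
on the floor or on the graph. So a vertex is determined by `a₂, a₄ ∈ {0, 1}` and a choice of the
lower or upper bound for `a₁` and `a₃`; it is integral, and the `16` choices give `12` points, since
the two bounds of `a₁` coincide exactly when `(a₂, a₄) = (1, 0)` and those of `a₃` exactly when
`(a₂, a₄) = (1, 1)`. By Fubini the volume is `∫∫_{[0,1]²} (1 + a₄ - a₂) (2 - a₂ - a₄) = 1`.
-/

open Set MeasureTheory

theorem AffineMap.mem_extremePoints_of_mapsTo {𝕜 E F : Type*} [Ring 𝕜] [PartialOrder 𝕜]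
    [IsOrderedRing 𝕜] [AddCommGroup E] [Module 𝕜 E] [AddCommGroup F] [Module 𝕜 F]
    {B : Set E} {S : Set F}
    (ℓ : E →ᵃ[𝕜] F) (hℓ : Function.Injective ℓ) (hBS : MapsTo ℓ B S) {p : E} (hp : p ∈ B)
    (h : ℓ p ∈ extremePoints 𝕜 S) : p ∈ extremePoints 𝕜 B := by
  refine ⟨hp, fun y hy z hz hpyz ↦ hℓ (h.2 (hBS hy) (hBS hz) ?_)⟩
  rw [← image_openSegment]
  exact mem_image_of_mem ℓ hpyz

variable {E : Type*}

def underGraph (B : Set E) (f : E → ℝ) : Set (E × ℝ) :=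
  {q | q.1 ∈ B ∧ q.2 ∈ Icc 0 (f q.1)}

@[simp]
lemma mem_underGraph {B : Set E} {f : E → ℝ} {q : E × ℝ} :
    q ∈ underGraph B f ↔ q.1 ∈ B ∧ q.2 ∈ Icc 0 (f q.1) :=
  Iff.rfl

section Convex

variable [AddCommGroup E] [Module ℝ E]

theorem extremePoints_underGraph {B : Set E} {f : E →ᵃ[ℝ] ℝ} (hf : ∀ p ∈ B, 0 ≤ f p) :
    extremePoints ℝ (underGraph B f) =
      {q | q.1 ∈ extremePoints ℝ B ∧ (q.2 = 0 ∨ q.2 = f q.1)} := by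
  ext ⟨p, u⟩
  constructor
  · intro hq
    have hp : p ∈ B := hq.1.1
    have hfiber : {p} ×ˢ Icc 0 (f p) ⊆ underGraph B f := by
      rintro ⟨p', u'⟩ ⟨hp', hu'⟩
      obtain rfl : p' = p := hp'
      exact ⟨hp, hu'⟩
    have hu : u = 0 ∨ u = f p := by
      simpa [extremePoints_Icc (hf p hp)] using
        inter_extremePoints_subset_extremePoints_of_subset hfiber
          ⟨⟨mem_singleton p, hq.1.2⟩, hq⟩
    -- the graph of `g = 0` or of `g = f` is an affine copy of `B` in the region, through `(p, u)`
    obtain ⟨g, hgp, hg⟩ : ∃ g : E →ᵃ[ℝ] ℝ, g p = u ∧ ∀ x ∈ B, g x ∈ Icc 0 (f x) := by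
      rcases hu with rfl | rfl
      exacts [⟨0, rfl, fun x hx ↦ ⟨le_rfl, hf x hx⟩⟩, ⟨f, rfl, fun x hx ↦ ⟨hf x hx, le_rfl⟩⟩]
    refine ⟨AffineMap.mem_extremePoints_of_mapsTo (S := underGraph B f)
      ((AffineMap.id ℝ E).prod g) (fun x y h ↦ congrArg Prod.fst h) (fun x hx ↦ ⟨hx, hg x hx⟩) hp
      (by simpa [hgp]), hu⟩
  · rintro ⟨hp, hu⟩
    have hu' : u ∈ extremePoints ℝ (Icc 0 (f p)) := by
      rwa [extremePoints_Icc (hf p hp.1)]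
    refine ⟨⟨hp.1, hu'.1⟩, ?_⟩
    rintro ⟨y, v⟩ hyv ⟨z, w⟩ hzw ⟨a, b, ha, hb, hab, h⟩
    simp only [Prod.mk.injEq, Prod.smul_mk, Prod.mk_add_mk] at h
    obtain ⟨rfl, rfl⟩ := (mem_extremePoints.1 hp).2 y hyv.1 z hzw.1 ⟨a, b, ha, hb, hab, h.1⟩
    exact Prod.ext rfl (hu'.2 hyv.2 hzw.2 ⟨a, b, ha, hb, hab, h.2⟩)

end Convex

section Measure

variable [MeasurableSpace E] {B : Set E} {f : E → ℝ}

lemma MeasurableSet.underGraph (hB : MeasurableSet B) (hf : Measurable f) :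
    MeasurableSet (underGraph B f) :=
  (hB.preimage measurable_fst).inter <|
    (measurableSet_le measurable_const measurable_snd).inter
      (measurableSet_le measurable_snd (hf.comp measurable_fst))

theorem setLIntegral_underGraph (μ : Measure E) (hB : MeasurableSet B)
    (hf : Measurable f) {g : E → ENNReal} (hg : Measurable g) :
    ∫⁻ q in underGraph B f, g q.1 ∂μ.prod volume = ∫⁻ p in B, ENNReal.ofReal (f p) * g p ∂μ := by
  have hmeas : Measurable ((underGraph B f).indicator fun q : E × ℝ ↦ g q.1) :=
    (hg.comp measurable_fst).indicator (hB.underGraph hf)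
  rw [← lintegral_indicator (hB.underGraph hf), ← lintegral_indicator hB,
    lintegral_prod _ hmeas.aemeasurable]
  congr 1
  ext p
  by_cases hp : p ∈ B
  · have hfiber : ∀ u, (underGraph B f).indicator (fun q ↦ g q.1) (p, u) =
        (Icc 0 (f p)).indicator (fun _ ↦ g p) u := fun u ↦ by
      simp [indicator, hp]
    simp only [hfiber, lintegral_indicator_const measurableSet_Icc, Real.volume_Icc, sub_zero,
      indicator_of_mem hp, mul_comm]
  · simp [indicator, hp]

end Measure

/-! Subscripts refer to the paper's coordinates `a₁, …, a₄`, which are `a 0, …, a 3` here. -/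

def upperBound₁ : ℝ × ℝ →ᵃ[ℝ] ℝ :=
  AffineMap.const ℝ _ 1 + (LinearMap.snd ℝ ℝ ℝ - LinearMap.fst ℝ ℝ ℝ).toAffineMap

def upperBound₃ : ℝ × ℝ →ᵃ[ℝ] ℝ :=
  AffineMap.const ℝ _ 2 - (LinearMap.fst ℝ ℝ ℝ + LinearMap.snd ℝ ℝ ℝ).toAffineMap

@[simp] lemma upperBound₁_apply (p : ℝ × ℝ) : upperBound₁ p = 1 + p.2 - p.1 := by
  simp [upperBound₁]; ring

@[simp] lemma upperBound₃_apply (p : ℝ × ℝ) : upperBound₃ p = 2 - p.1 - p.2 := by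
  simp [upperBound₃]; ring

lemma upperBound₁_nonneg : ∀ p ∈ Icc (0 : ℝ) 1 ×ˢ Icc (0 : ℝ) 1, 0 ≤ upperBound₁ p := by
  rintro ⟨x, y⟩ ⟨⟨-, hx⟩, ⟨hy, -⟩⟩
  simp only [upperBound₁_apply]
  linarith

lemma upperBound₃_nonneg : ∀ p ∈ Icc (0 : ℝ) 1 ×ˢ Icc (0 : ℝ) 1, 0 ≤ upperBound₃ p := by
  rintro ⟨x, y⟩ ⟨⟨-, hx⟩, ⟨-, hy⟩⟩
  simp only [upperBound₃_apply]
  linarith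

def Δ : Set (Fin 4 → ℝ) := {a | (∀ i, 0 ≤ a i) ∧ a 1 ≤ 1 ∧ a 3 ≤ 1 ∧
    a 0 ≤ 1 + a 3 - a 1 ∧ a 2 ≤ 2 - a 1 - a 3}

def ΔBase : Set ((ℝ × ℝ) × ℝ) := underGraph (Icc 0 1 ×ˢ Icc 0 1) upperBound₁

def ΔFibered : Set (((ℝ × ℝ) × ℝ) × ℝ) :=
  underGraph ΔBase (upperBound₃.comp AffineMap.fst)

def splitCoords : (Fin 4 → ℝ) ≃ₗ[ℝ] ((ℝ × ℝ) × ℝ) × ℝ where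
  toFun a := (((a 1, a 3), a 0), a 2)
  invFun q := ![q.1.2, q.1.1.1, q.2, q.1.1.2]
  map_add' _ _ := rfl
  map_smul' _ _ := rfl
  left_inv a := by ext i; fin_cases i <;> rfl
  right_inv _ := rfl

@[simp] lemma splitCoords_apply (a : Fin 4 → ℝ) : splitCoords a = (((a 1, a 3), a 0), a 2) := rfl

lemma preimage_splitCoords_ΔFibered : splitCoords ⁻¹' ΔFibered = Δ := by
  ext a
  simp [ΔFibered, ΔBase, Δ, Fin.forall_fin_succ, Prod.mk_le_mk]
  tauto

lemma extremePoints_Δ : extremePoints ℝ Δ = {a | (a 1 = 0 ∨ a 1 = 1) ∧ (a 3 = 0 ∨ a 3 = 1) ∧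
    (a 0 = 0 ∨ a 0 = 1 + a 3 - a 1) ∧ (a 2 = 0 ∨ a 2 = 2 - a 1 - a 3)} := by
  have hFibered : ∀ q ∈ ΔBase, 0 ≤ upperBound₃.comp AffineMap.fst q :=
    fun q hq ↦ upperBound₃_nonneg q.1 hq.1
  rw [← preimage_splitCoords_ΔFibered, ← LinearEquiv.image_symm_eq_preimage,
    ← image_extremePoints, LinearEquiv.image_symm_eq_preimage, ΔFibered,
    extremePoints_underGraph hFibered, ΔBase, extremePoints_underGraph upperBound₁_nonneg,
    extremePoints_prod, extremePoints_Icc zero_le_one]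
  ext a
  simp [and_assoc]

/-- `c i` selects the lower or the upper bound of the `i`-th coordinate. -/
def vertex (c : Fin 4 → Bool) : Fin 4 → ℤ :=
  let t i : ℤ := (c i).toNat
  ![t 0 * (1 + t 3 - t 1), t 1, t 2 * (2 - t 1 - t 3), t 3]

lemma exists_bool_toNat_mul_eq {u w : ℝ} : (∃ b : Bool, b.toNat * w = u) ↔ u = 0 ∨ u = w := by
  simp [eq_comm]

lemma extremePoints_Δ_eq_range : extremePoints ℝ Δ = range fun c i ↦ (vertex c i : ℝ) := by
  ext a
  rw [extremePoints_Δ]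
  constructor
  · rintro ⟨h1, h3, h0, h2⟩
    obtain ⟨b1, h1⟩ := (exists_bool_toNat_mul_eq (w := 1)).2 h1
    obtain ⟨b3, h3⟩ := (exists_bool_toNat_mul_eq (w := 1)).2 h3
    obtain ⟨b0, h0⟩ := exists_bool_toNat_mul_eq.2 h0
    obtain ⟨b2, h2⟩ := exists_bool_toNat_mul_eq.2 h2
    refine ⟨![b0, b1, b2, b3], funext fun i ↦ ?_⟩
    fin_cases i <;> simp [vertex, ← h0, ← h1, ← h2, ← h3]
  · rintro ⟨c, rfl⟩
    refine ⟨exists_bool_toNat_mul_eq.1 ⟨c 1, ?_⟩, exists_bool_toNat_mul_eq.1 ⟨c 3, ?_⟩,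
      exists_bool_toNat_mul_eq.1 ⟨c 0, ?_⟩, exists_bool_toNat_mul_eq.1 ⟨c 2, ?_⟩⟩ <;> simp [vertex]

lemma ncard_extremePoints_Δ : (extremePoints ℝ Δ).ncard = 12 := by
  have hcast : Function.Injective fun (v : Fin 4 → ℤ) i ↦ (v i : ℝ) :=
    fun v w h ↦ funext fun i ↦ Int.cast_injective (congrFun h i)
  have hrange : range vertex = ↑(Finset.univ.image vertex) := by simp
  rw [extremePoints_Δ_eq_range,
    show (fun c i ↦ (vertex c i : ℝ)) = (fun v i ↦ (v i : ℝ)) ∘ vertex from rfl, range_comp,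
    ncard_image_of_injective _ hcast, hrange, ncard_coe_finset]
  decide

/-- Split off `a₃`, then `a₁`, then `(a₂, a₄)`, and reorder the factors by swaps. -/
lemma measurePreserving_splitCoords : MeasurePreserving splitCoords :=
  ((Measure.measurePreserving_swap.prod (MeasurePreserving.id volume)).comp
    Measure.measurePreserving_swap).comp <|
    ((MeasurePreserving.id volume).prod
      (((MeasurePreserving.id volume).prod (volume_preserving_finTwoArrow ℝ)).comp
        (volume_preserving_piFinSuccAbove (fun _ : Fin 3 ↦ ℝ) 0))).comp
      (volume_preserving_piFinSuccAbove (fun _ : Fin 4 ↦ ℝ) 2)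

lemma integrableOn_upperBound₁_mul_upperBound₃ :
    IntegrableOn (fun p ↦ upperBound₁ p * upperBound₃ p) (Icc (0 : ℝ) 1 ×ˢ Icc (0 : ℝ) 1) :=
  (upperBound₁.continuous_of_finiteDimensional.mul
    upperBound₃.continuous_of_finiteDimensional).continuousOn.integrableOn_compact
    (isCompact_Icc.prod isCompact_Icc)

lemma integral_upperBound₁_mul_upperBound₃ :
    ∫ p in Icc (0 : ℝ) 1 ×ˢ Icc (0 : ℝ) 1, upperBound₁ p * upperBound₃ p = 1 := by
  have inner (x : ℝ) :
      ∫ y in (0 : ℝ)..1, (1 + y - x) * (2 - x - y) = x ^ 2 - 3 * x + 13 / 6 := by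
    have expand : (fun y : ℝ ↦ (1 + y - x) * (2 - x - y)) =
        fun y ↦ (2 - 3 * x + x ^ 2) + y - y ^ 2 := by
      funext y; ring
    rw [expand, intervalIntegral.integral_sub, intervalIntegral.integral_add]
    · norm_num; ring
    all_goals apply Continuous.intervalIntegrable; fun_prop
  rw [Measure.volume_eq_prod, setIntegral_prod _ integrableOn_upperBound₁_mul_upperBound₃]
  simp only [upperBound₁_apply, upperBound₃_apply, integral_Icc_eq_integral_Ioc,
    ← intervalIntegral.integral_of_le zero_le_one, inner]
  rw [intervalIntegral.integral_add, intervalIntegral.integral_sub]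
  · rw [intervalIntegral.integral_const_mul]; norm_num
  all_goals apply Continuous.intervalIntegrable; fun_prop

lemma setLIntegral_upperBound₁_mul_upperBound₃ :
    ∫⁻ p in Icc (0 : ℝ) 1 ×ˢ Icc (0 : ℝ) 1,
      ENNReal.ofReal (upperBound₁ p) * ENNReal.ofReal (upperBound₃ p) = 1 := by
  have hsq : MeasurableSet (Icc (0 : ℝ) 1 ×ˢ Icc (0 : ℝ) 1) :=
    measurableSet_Icc.prod measurableSet_Icc
  rw [setLIntegral_congr_fun hsq fun p hp ↦ (ENNReal.ofReal_mul (upperBound₁_nonneg p hp)).symm,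
    ← ofReal_integral_eq_lintegral_ofReal integrableOn_upperBound₁_mul_upperBound₃
      ((ae_restrict_iff' hsq).2 (ae_of_all _ fun p hp ↦
        mul_nonneg (upperBound₁_nonneg p hp) (upperBound₃_nonneg p hp))),
    integral_upperBound₁_mul_upperBound₃, ENNReal.ofReal_one]

lemma volume_Δ : volume Δ = 1 := by
  have hsq : MeasurableSet (Icc (0 : ℝ) 1 ×ˢ Icc (0 : ℝ) 1) :=
    measurableSet_Icc.prod measurableSet_Icc
  have hf₁ : Measurable upperBound₁ := upperBound₁.continuous_of_finiteDimensional.measurable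
  have hf₃ : Measurable upperBound₃ := upperBound₃.continuous_of_finiteDimensional.measurable
  have hBase : MeasurableSet ΔBase := hsq.underGraph hf₁
  have hFibered : MeasurableSet ΔFibered := hBase.underGraph (hf₃.comp measurable_fst)
  calc volume Δ
      = volume ΔFibered := by
        rw [← preimage_splitCoords_ΔFibered,
          measurePreserving_splitCoords.measure_preimage hFibered.nullMeasurableSet]
    _ = ∫⁻ q in ΔBase, ENNReal.ofReal (upperBound₃ q.1) * 1 := by
        rw [← setLIntegral_one]
        exact setLIntegral_underGraph volume hBase (hf₃.comp measurable_fst) measurable_const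
    _ = 1 := by
        simp_rw [mul_one]
        exact (setLIntegral_underGraph volume hsq hf₁ (ENNReal.measurable_ofReal.comp hf₃)).trans
          setLIntegral_upperBound₁_mul_upperBound₃

/-- The polytope `Δ ⊆ ℝ⁴` given by `a_i ≥ 0`, `a₂ ≤ 1`, `a₄ ≤ 1`, `a₁ ≤ 1 + a₄ - a₂`,
`a₃ ≤ 2 - a₂ - a₄` is integral (all its vertices are lattice points), has exactly `12`
vertices, and has Euclidean volume `1`. -/
theorem stmt16 :
    let D : Set (Fin 4 → ℝ) := {a | (∀ i, 0 ≤ a i) ∧ a 1 ≤ 1 ∧ a 3 ≤ 1 ∧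
      a 0 ≤ 1 + a 3 - a 1 ∧ a 2 ≤ 2 - a 1 - a 3}
    (∀ x ∈ Set.extremePoints ℝ D, ∀ i, ∃ z : ℤ, x i = (z : ℝ)) ∧
    (Set.extremePoints ℝ D).ncard = 12 ∧
    MeasureTheory.volume D = 1 := by
  intro D
  refine ⟨fun x hx i ↦ ?_, ncard_extremePoints_Δ, volume_Δ⟩
  obtain ⟨c, rfl⟩ : x ∈ range fun c i ↦ (vertex c i : ℝ) := extremePoints_Δ_eq_range ▸ hx
  exact ⟨vertex c i, rfl⟩
end
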